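/- arXiv:1711.01943 — 4 statements merged into one kernel-verified Lean document; each statement's English description precedes it below -/
import Mathlib

section
/- Let 𝔸 and 𝔹 be finite idempotent algebras of the same finite functional signature, let ℂ ≤_sp 𝔸 × 𝔹 be a subdirect product, and let ℂ′ be a subalgebra of ℂ with ℂ′ ⊴ ℂ such that ℂ′ ≤_sp 𝔸 × 𝔹 is again subdirect. Let α, β be the linkedness congruences on A and B induced by ℂ, and α′, β′ the linkedness congruences induced by ℂ′. Then α = α′ and β = β′. -/
/-!
Let a term `t` of arity `n` witness `C' ⊴ C` and let `(a, b), (a', b) ∈ C`. Evaluate `t` at the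
tuples whose first `k` entries are pairs of `C'` above `a'`, whose `k`-th entry is `(a, b)` or
`(a', b)`, and whose remaining entries are pairs of `C'` above `a`. By absorption both values lie
in `C'`, and they share their second coordinate, so they are linked in `C'`. Letting `k` run from
`0` to `n`, idempotence turns this into a chain of `C'`-links from `t(a, …, a) = a` to
`t(a', …, a') = a'`. Swapping the coordinates gives the statement for `B`.
-/

/-- Terms over a functional signature `σ` with arities `ar`, in variables `Fin n`. -/
inductive Term (σ : Type) (ar : σ → ℕ) (n : ℕ) : Type
  | var : Fin n → Term σ ar n
  | op : (s : σ) → (Fin (ar s) → Term σ ar n) → Term σ ar n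

/-- Evaluation of a term in an algebra with basic operations `ops`. -/
def Term.eval {σ : Type} {ar : σ → ℕ} {A : Type} {n : ℕ}
    (ops : (s : σ) → (Fin (ar s) → A) → A) :
    Term σ ar n → (Fin n → A) → A
  | .var i, v => v i
  | .op s ts, v => ops s fun j => (ts j).eval ops v

/-- `B` is closed under all the basic operations `ops`. -/
def ClosedUnder {σ : Type} {ar : σ → ℕ} {A : Type}
    (ops : (s : σ) → (Fin (ar s) → A) → A) (B : Set A) : Prop :=
  ∀ (s : σ) (a : Fin (ar s) → A), (∀ i, a i ∈ B) → ops s a ∈ B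

/-- Coordinatewise operations on a product of two algebras. -/
def prodOps {σ : Type} {ar : σ → ℕ} {A B : Type}
    (opsA : (s : σ) → (Fin (ar s) → A) → A) (opsB : (s : σ) → (Fin (ar s) → B) → B) :
    (s : σ) → (Fin (ar s) → A × B) → A × B :=
  fun s a => (opsA s fun i => (a i).1, opsB s fun i => (a i).2)

/-- The term `t` witnesses that `B` absorbs the subalgebra on `U`. -/
def AbsWitness {σ : Type} {ar : σ → ℕ} {A : Type}
    (ops : (s : σ) → (Fin (ar s) → A) → A) {n : ℕ} (t : Term σ ar n)
    (B U : Set A) : Prop :=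
  ∀ (i : Fin n) (a : Fin n → A), (∀ j, a j ∈ U) → (∀ j, j ≠ i → a j ∈ B) →
    t.eval ops a ∈ B

/-- `B` absorbs the subalgebra on `U` (witnessed by some term). -/
def AbsorbsSub {σ : Type} {ar : σ → ℕ} {A : Type}
    (ops : (s : σ) → (Fin (ar s) → A) → A) (B U : Set A) : Prop :=
  ∃ (n : ℕ) (t : Term σ ar n), AbsWitness ops t B U

/-- The one-step link relation on the first coordinate. -/
def LinkA {A B : Type} (C : Set (A × B)) : A → A → Prop :=
  fun a a' => ∃ b, (a, b) ∈ C ∧ (a', b) ∈ C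

/-- The one-step link relation on the second coordinate. -/
def LinkB {A B : Type} (C : Set (A × B)) : B → B → Prop :=
  fun b b' => ∃ a, (a, b) ∈ C ∧ (a, b') ∈ C

theorem Term.map_eval {σ : Type} {ar : σ → ℕ} {X Y : Type} {n : ℕ}
    {opsX : (s : σ) → (Fin (ar s) → X) → X} {opsY : (s : σ) → (Fin (ar s) → Y) → Y}
    (f : X → Y) (hf : ∀ s a, f (opsX s a) = opsY s (f ∘ a))
    (t : Term σ ar n) (v : Fin n → X) :
    f (t.eval opsX v) = t.eval opsY (f ∘ v) := by
  induction t with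
  | var i => rfl
  | op s ts ih => simp only [Term.eval, hf]; congr 1; funext j; exact ih j

theorem Term.eval_prodOps {σ : Type} {ar : σ → ℕ} {A B : Type} {n : ℕ}
    (opsA : (s : σ) → (Fin (ar s) → A) → A) (opsB : (s : σ) → (Fin (ar s) → B) → B)
    (t : Term σ ar n) (v : Fin n → A × B) :
    t.eval (prodOps opsA opsB) v = (t.eval opsA (Prod.fst ∘ v), t.eval opsB (Prod.snd ∘ v)) :=
  Prod.ext (t.map_eval Prod.fst (fun _ _ => rfl) v) (t.map_eval Prod.snd (fun _ _ => rfl) v)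

theorem Term.eval_const {σ : Type} {ar : σ → ℕ} {A : Type} {n : ℕ}
    {ops : (s : σ) → (Fin (ar s) → A) → A} (hidem : ∀ s a, ops s (fun _ => a) = a)
    (t : Term σ ar n) (a : A) : t.eval ops (fun _ => a) = a := by
  induction t with
  | var i => rfl
  | op s ts ih => simp only [Term.eval, ih, hidem]

theorem AbsWitness.preimage {σ : Type} {ar : σ → ℕ} {X Y : Type} {n : ℕ}
    {opsX : (s : σ) → (Fin (ar s) → X) → X} {opsY : (s : σ) → (Fin (ar s) → Y) → Y}
    {t : Term σ ar n} {B U : Set Y} (ht : AbsWitness opsY t B U)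
    (f : X → Y) (hf : ∀ s a, f (opsX s a) = opsY s (f ∘ a)) :
    AbsWitness opsX t (f ⁻¹' B) (f ⁻¹' U) := by
  intro i a hU hB
  rw [Set.mem_preimage, t.map_eval f hf]
  exact ht i (f ∘ a) hU hB

theorem AbsorbsSub.preimage_swap {σ : Type} {ar : σ → ℕ} {A B : Type}
    {opsA : (s : σ) → (Fin (ar s) → A) → A} {opsB : (s : σ) → (Fin (ar s) → B) → B}
    {C' C : Set (A × B)} (h : AbsorbsSub (prodOps opsA opsB) C' C) :
    AbsorbsSub (prodOps opsB opsA) (Prod.swap ⁻¹' C') (Prod.swap ⁻¹' C) :=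
  let ⟨n, t, ht⟩ := h
  ⟨n, t, ht.preimage Prod.swap fun _ _ => rfl⟩

section Link

variable {A B : Type}

theorem linkB_eq_linkA_preimage_swap (C : Set (A × B)) : LinkB C = LinkA (Prod.swap ⁻¹' C) :=
  rfl

theorem linkA_mono {C' C : Set (A × B)} (h : C' ⊆ C) : LinkA C' ≤ LinkA C :=
  fun _ _ ⟨b, hab, ha'b⟩ => ⟨b, h hab, h ha'b⟩

theorem linkA_self {C : Set (A × B)} (hC : ∀ a, ∃ b, (a, b) ∈ C) (a : A) : LinkA C a a :=
  let ⟨b, hb⟩ := hC a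
  ⟨b, hb, hb⟩

end Link

section Absorption

variable {σ : Type} {ar : σ → ℕ} {A B : Type}
  {opsA : (s : σ) → (Fin (ar s) → A) → A} {opsB : (s : σ) → (Fin (ar s) → B) → B}
  {C' C : Set (A × B)} {n : ℕ} {t : Term σ ar n}

theorem AbsWitness.linkA_update (ht : AbsWitness (prodOps opsA opsB) t C' C) (hsub : C' ⊆ C)
    {u : Fin n → A × B} (hu : ∀ j, u j ∈ C') (i : Fin n) {a a' : A} {b : B}
    (hab : (a, b) ∈ C) (ha'b : (a', b) ∈ C) :
    LinkA C' (t.eval opsA (Prod.fst ∘ Function.update u i (a, b)))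
      (t.eval opsA (Prod.fst ∘ Function.update u i (a', b))) := by
  have mem : ∀ x ∈ C, t.eval (prodOps opsA opsB) (Function.update u i x) ∈ C' := by
    intro x hx
    refine ht i _ (fun j => ?_) (fun j hj => ?_)
    · rcases eq_or_ne j i with rfl | hj
      · simpa using hx
      · simpa [hj] using hsub (hu j)
    · simpa [hj] using hu j
  refine ⟨t.eval opsB (Prod.snd ∘ Function.update u i (a, b)), ?_, ?_⟩
  · simpa only [Term.eval_prodOps] using mem _ hab
  · simpa only [Term.eval_prodOps, Function.comp_update] using mem _ ha'b

theorem AbsWitness.linkA_le_reflTransGen (hidem : ∀ s a, opsA s (fun _ => a) = a)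
    (ht : AbsWitness (prodOps opsA opsB) t C' C) (hsub : C' ⊆ C)
    (hC' : ∀ a, ∃ b, (a, b) ∈ C') : LinkA C ≤ Relation.ReflTransGen (LinkA C') := by
  rintro a a' ⟨b, hab, ha'b⟩
  obtain ⟨b₁, hb₁⟩ := hC' a
  obtain ⟨b₂, hb₂⟩ := hC' a'
  let x : ℕ → Fin n → A := fun k j => if (j : ℕ) < k then a' else a
  let u : ℕ → Fin n → A × B := fun k j => if (j : ℕ) < k then (a', b₂) else (a, b₁)
  have step : ∀ k < n, LinkA C' (t.eval opsA (x k)) (t.eval opsA (x (k + 1))) := by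
    intro k hk
    have hu : ∀ j, u k j ∈ C' := fun j => by dsimp only [u]; split_ifs <;> assumption
    convert ht.linkA_update hsub hu ⟨k, hk⟩ hab ha'b using 3 <;>
      funext j <;> simp only [x, u, Function.comp_apply, Function.update_apply, Fin.ext_iff] <;>
      split_ifs <;> first | rfl | omega
  have walk := reflTransGen_of_succ_of_le
    (fun k l => LinkA C' (t.eval opsA (x k)) (t.eval opsA (x l)))
    (fun k hk => by simpa only [Order.succ_eq_add_one] using step k hk.2) n.zero_le
  have hx₀ : x 0 = fun _ => a := funext fun j => if_neg j.val.not_lt_zero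
  have hxₙ : x n = fun _ => a' := funext fun j => if_pos j.isLt
  simpa only [Function.onFun, hx₀, hxₙ, t.eval_const hidem] using walk.lift _ fun _ _ h => h

theorem transGen_linkA_eq_of_absorbsSub (hidem : ∀ s a, opsA s (fun _ => a) = a)
    (habs : AbsorbsSub (prodOps opsA opsB) C' C) (hsub : C' ⊆ C)
    (hC' : ∀ a, ∃ b, (a, b) ∈ C') :
    Relation.TransGen (LinkA C) = Relation.TransGen (LinkA C') := by
  obtain ⟨n, t, ht⟩ := habs
  refine le_antisymm (Relation.TransGen.closed fun a a' h => ?_)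
    (Relation.TransGen.mono (linkA_mono hsub))
  rcases Relation.reflTransGen_iff_eq_or_transGen.1
    (ht.linkA_le_reflTransGen hidem hsub hC' a a' h) with rfl | h'
  · exact .single (linkA_self hC' _)
  · exact h'

end Absorption

theorem absorbing_subdirect_same_linkedness_general
    {σ : Type} {ar : σ → ℕ} {A B : Type}
    (opsA : (s : σ) → (Fin (ar s) → A) → A) (opsB : (s : σ) → (Fin (ar s) → B) → B)
    (hidemA : ∀ (s : σ) (a : A), opsA s (fun _ => a) = a)
    (hidemB : ∀ (s : σ) (b : B), opsB s (fun _ => b) = b)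
    (C C' : Set (A × B))
    (hsub : C' ⊆ C)
    (habs : AbsorbsSub (prodOps opsA opsB) C' C)
    (hC'ontoA : ∀ a : A, ∃ b : B, (a, b) ∈ C')
    (hC'ontoB : ∀ b : B, ∃ a : A, (a, b) ∈ C') :
    Relation.TransGen (LinkA C) = Relation.TransGen (LinkA C') ∧
    Relation.TransGen (LinkB C) = Relation.TransGen (LinkB C') := by
  refine ⟨transGen_linkA_eq_of_absorbsSub hidemA habs hsub hC'ontoA, ?_⟩
  rw [linkB_eq_linkA_preimage_swap, linkB_eq_linkA_preimage_swap]
  exact transGen_linkA_eq_of_absorbsSub hidemB habs.preimage_swap (Set.preimage_mono hsub)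
    hC'ontoB

/-- if `ℂ' ⊴ ℂ ≤_sp 𝔸 × 𝔹` with `ℂ'` again subdirect (finite idempotent
algebras), then the linkedness congruences induced by `ℂ` and `ℂ'` coincide. -/
theorem absorbing_subdirect_same_linkedness
    {σ : Type} [Finite σ] {ar : σ → ℕ} {A B : Type} [Finite A] [Finite B]
    [Nonempty A] [Nonempty B]
    (opsA : (s : σ) → (Fin (ar s) → A) → A) (opsB : (s : σ) → (Fin (ar s) → B) → B)
    (hidemA : ∀ (s : σ) (a : A), opsA s (fun _ => a) = a)
    (hidemB : ∀ (s : σ) (b : B), opsB s (fun _ => b) = b)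
    (C C' : Set (A × B))
    (hCclosed : ClosedUnder (prodOps opsA opsB) C)
    (hContoA : ∀ a : A, ∃ b : B, (a, b) ∈ C)
    (hContoB : ∀ b : B, ∃ a : A, (a, b) ∈ C)
    (hsub : C' ⊆ C) (hC'ne : C'.Nonempty)
    (hC'closed : ClosedUnder (prodOps opsA opsB) C')
    (habs : AbsorbsSub (prodOps opsA opsB) C' C)
    (hC'ontoA : ∀ a : A, ∃ b : B, (a, b) ∈ C')
    (hC'ontoB : ∀ b : B, ∃ a : A, (a, b) ∈ C') :
    Relation.TransGen (LinkA C) = Relation.TransGen (LinkA C') ∧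
    Relation.TransGen (LinkB C) = Relation.TransGen (LinkB C') :=
  absorbing_subdirect_same_linkedness_general opsA opsB hidemA hidemB C C' hsub habs hC'ontoA
    hC'ontoB
end

section
/- Let 𝔸, 𝔹, 𝔸′, 𝔹′ be algebras of the same finite functional signature with 𝔹 ≤ 𝔸 and 𝔹′ ≤ 𝔸′. If 𝔹 ⊴ 𝔸 (witnessed by some term t) and 𝔹′ ⊴ 𝔸′ (witnessed by some term t′), then there exists a single term s, in the common signature, which simultaneously witnesses both absorptions 𝔹 ⊴ 𝔸 and 𝔹′ ⊴ 𝔸′. -/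
/-- Substitution of terms into a term. -/
def Term.subst {σ : Type} {ar : σ → ℕ} {n m : ℕ}
    (f : Fin n → Term σ ar m) : Term σ ar n → Term σ ar m
  | .var i => f i
  | .op s ts => .op s fun j => (ts j).subst f

theorem Term.eval_subst {σ : Type} {ar : σ → ℕ} {A : Type} {n m : ℕ}
    (ops : (s : σ) → (Fin (ar s) → A) → A)
    (f : Fin n → Term σ ar m) (t : Term σ ar n) (v : Fin m → A) :
    (t.subst f).eval ops v = t.eval ops (fun i => (f i).eval ops v) := by
  induction t with
  | var i => rfl
  | op s ts ih => simp only [Term.subst, Term.eval, ih]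

theorem Term.eval_mem {σ : Type} {ar : σ → ℕ} {A : Type} {n : ℕ}
    (ops : (s : σ) → (Fin (ar s) → A) → A) {B : Set A}
    (hB : ClosedUnder ops B) (t : Term σ ar n) (v : Fin n → A)
    (hv : ∀ i, v i ∈ B) : t.eval ops v ∈ B := by
  induction t with
  | var i => exact hv i
  | op s ts ih => exact hB s _ fun j => ih j

/-- two absorptions (in algebras of the same signature) can always be
witnessed by a single common term. -/
theorem common_absorption_term
    {σ : Type} [Finite σ] {ar : σ → ℕ} {A A' : Type} [Nonempty A] [Nonempty A']
    (opsA : (s : σ) → (Fin (ar s) → A) → A)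
    (opsA' : (s : σ) → (Fin (ar s) → A') → A')
    (B : Set A) (B' : Set A')
    (hBne : B.Nonempty) (hBclosed : ClosedUnder opsA B)
    (hB'ne : B'.Nonempty) (hB'closed : ClosedUnder opsA' B')
    (habs : AbsorbsSub opsA B Set.univ)
    (habs' : AbsorbsSub opsA' B' Set.univ) :
    ∃ (m : ℕ) (s : Term σ ar m),
      AbsWitness opsA s B Set.univ ∧ AbsWitness opsA' s B' Set.univ := by
  obtain ⟨n, t, ht⟩ := habs
  obtain ⟨n', t', ht'⟩ := habs'
  refine ⟨n' * n,
    t'.subst (fun j => t.subst (fun i => .var (finProdFinEquiv (j, i)))), ?_, ?_⟩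
  · intro i a _ ha
    rw [Term.eval_subst]
    refine Term.eval_mem opsA hBclosed t' _ fun j => ?_
    rw [Term.eval_subst]
    simp only [Term.eval]
    by_cases hj : j = (finProdFinEquiv.symm i).1
    · refine ht (finProdFinEquiv.symm i).2 _ (fun _ => Set.mem_univ _) fun k hk => ?_
      refine ha _ fun h => hk ?_
      have := congrArg (fun x => (finProdFinEquiv.symm x).2) h
      simpa [hj] using this
    · refine Term.eval_mem opsA hBclosed t _ fun k => ?_
      refine ha _ fun h => hj ?_
      have := congrArg (fun x => (finProdFinEquiv.symm x).1) h
      simpa using this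
  · intro i a _ ha
    rw [Term.eval_subst]
    refine ht' (finProdFinEquiv.symm i).1 _ (fun _ => Set.mem_univ _) fun j hj => ?_
    rw [Term.eval_subst]
    refine Term.eval_mem opsA' hB'closed t _ fun k => ?_
    refine ha _ fun h => hj ?_
    have := congrArg (fun x => (finProdFinEquiv.symm x).1) h
    simpa using this
end

section
/- Let A be a finite nonempty set and let e be a k-edge operation on A, for some k ≥ 2. Then the algebra (A, e) (signature consisting of a single (k+1)-ary symbol interpreted as e) has term operations d(x, y) (binary), p(x, y, z) (ternary), and s(x_1, …, x_k) (k-ary) such that for all x, y ∈ A: p(x, y, y) = x; p(x, x, y) = d(x, y); d(x, d(x, y)) = d(x, y); s(y, x, x, …, x) = d(x, y); and for each i with 2 ≤ i ≤ k, s applied to the tuple with y in position i and x in all other positions equals x. -/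
/-- `e` is a `k`-edge operation. -/
def IsEdgeOp {A : Type} (k : ℕ) (e : (Fin (k + 1) → A) → A) : Prop :=
  (∀ x y : A, e (fun i => if i.val ≤ 1 then x else y) = y) ∧
  (∀ x y : A, e (fun i => if i.val = 0 ∨ i.val = 2 then x else y) = y) ∧
  (∀ i : Fin (k + 1), 3 ≤ i.val → ∀ x y : A,
    e (fun j => if j = i then x else y) = y)

theorem pow_add_mul_eq_of_pow_add_eq {M : Type*} [Monoid M] {a : M} {i p n : ℕ}
    (h : a ^ (i + p) = a ^ i) (hn : i ≤ n) (c : ℕ) : a ^ (n + c * p) = a ^ n := by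
  obtain ⟨n, rfl⟩ := Nat.exists_eq_add_of_le hn
  induction c with
  | zero => simp
  | succ c ih =>
    calc a ^ (i + n + (c + 1) * p) = a ^ (i + p) * a ^ (n + c * p) := by
          rw [← pow_add]; ring_nf
      _ = a ^ (i + n) := by rw [h, ← pow_add, ← add_assoc, ih]

theorem exists_pos_isIdempotentElem_pow {M : Type*} [Monoid M] [Finite M] (a : M) :
    ∃ n, 0 < n ∧ IsIdempotentElem (a ^ n) := by
  obtain ⟨i, j, hij, heq⟩ := Finite.exists_ne_map_eq_of_infinite (α := ℕ) (a ^ ·)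
  wlog hlt : i < j generalizing i j
  · exact this j i hij.symm heq.symm (by omega)
  obtain ⟨p, rfl⟩ := Nat.exists_eq_add_of_lt hlt
  -- `a ^ n` is idempotent as soon as `n ≥ i` is a multiple of the period `p + 1`.
  refine ⟨(i + 1) * (p + 1), by positivity, ?_⟩
  have hperiod : a ^ (i + (p + 1)) = a ^ i := by rw [← add_assoc]; exact heq.symm
  rw [IsIdempotentElem, ← pow_add]
  exact pow_add_mul_eq_of_pow_add_eq hperiod (by nlinarith) (i + 1)

theorem exists_pos_forall_isIdempotentElem_pow (M : Type*) [Monoid M] [Finite M] :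
    ∃ n, 0 < n ∧ ∀ a : M, IsIdempotentElem (a ^ n) := by
  have := Fintype.ofFinite M
  choose n hn hidem using exists_pos_isIdempotentElem_pow (M := M)
  refine ⟨∏ a, n a, Finset.prod_pos fun a _ => hn a, fun a => ?_⟩
  obtain ⟨c, hc⟩ := Finset.dvd_prod_of_mem n (Finset.mem_univ a)
  rw [hc, pow_mul]
  exact (hidem a).pow c

theorem exists_forall_iterate_succ_idempotent (α : Type*) [Finite α] :
    ∃ m, ∀ (f : α → α) (z : α), f^[m + 1] (f^[m + 1] z) = f^[m + 1] z := by
  have : Finite (Function.End α) := inferInstanceAs (Finite (α → α))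
  obtain ⟨n, hn, hidem⟩ := exists_pos_forall_isIdempotentElem_pow (Function.End α)
  obtain ⟨m, rfl⟩ : ∃ m, n = m + 1 := ⟨n - 1, by omega⟩
  exact ⟨m, fun f => congrFun (hidem f)⟩

theorem Fin.cons_const {α : Type*} {n : ℕ} (a : α) :
    (Fin.cons a fun _ : Fin n => a : Fin (n + 1) → α) = fun _ => a :=
  Fin.cons_self_tail (fun _ => a)

namespace Term

variable {σ : Type} {ar : σ → ℕ} {n : ℕ}

def iterOp (s : σ) (ctx : Fin (ar s) → Term σ ar n) (i : Fin (ar s)) (t : Term σ ar n) :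
    ℕ → Term σ ar n
  | 0 => t
  | j + 1 => .op s (Function.update ctx i (iterOp s ctx i t j))

theorem eval_iterOp {A : Type} (ops : (s : σ) → (Fin (ar s) → A) → A) (s : σ)
    (ctx : Fin (ar s) → Term σ ar n) (i : Fin (ar s)) (t : Term σ ar n) (j : ℕ)
    (v : Fin n → A) :
    (iterOp s ctx i t j).eval ops v =
      (fun z => ops s (Function.update (fun l => (ctx l).eval ops v) i z))^[j] (t.eval ops v) := by
  induction j with
  | zero => rfl
  | succ j ih =>
    rw [Function.iterate_succ_apply', ← ih, iterOp, eval]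
    congr 1
    exact funext (Function.apply_update (fun _ u => eval ops u v) ctx i _)

end Term

def edgeStep {A : Type} {k : ℕ} (e : (Fin (k + 1) → A) → A) (x z : A) : A :=
  e (Function.update (fun _ => x) 1 z)

def dTerm (k m : ℕ) : Term Unit (fun _ => k + 1) 2 :=
  Term.iterOp () (fun _ => .var 0) 1 (.var 1) m

def pTerm (k m : ℕ) : Term Unit (fun _ => k + 1) 3 :=
  .op () (Function.update (Function.update (fun _ => .var 0) 0 (.var 1)) 1
    (Term.iterOp () (fun _ => .var 1) 1 (.var 2) m))

def sTerm (k m : ℕ) : Term Unit (fun _ => k + 2 + 1) (k + 2) :=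
  Term.iterOp () (Fin.cons (.var 1) .var) 1 (.var 0) m

section EdgeTerms

variable {A : Type} {k : ℕ} (m : ℕ)

theorem eval_dTerm (e : (Fin (k + 1) → A) → A) (x y : A) :
    (dTerm k m).eval (fun _ => e) ![x, y] = (edgeStep e x)^[m] y :=
  Term.eval_iterOp _ _ _ _ _ _ _

theorem eval_pTerm (e : (Fin (k + 1) → A) → A) (x y z : A) :
    (pTerm k m).eval (fun _ => e) ![x, y, z] =
      e (Function.update (Function.update (fun _ => x) 0 y) 1 ((edgeStep e y)^[m] z)) := by
  rw [pTerm, Term.eval]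
  congr 1
  funext i
  simp only [Function.update_apply]
  split_ifs
  exacts [Term.eval_iterOp .., rfl, rfl]

theorem eval_sTerm (e : (Fin (k + 2 + 1) → A) → A) (v : Fin (k + 2) → A) :
    (sTerm k m).eval (fun _ => e) v =
      (fun z => e (Function.update (Fin.cons (v 1) v) 1 z))^[m] (v 0) := by
  rw [sTerm, Term.eval_iterOp]
  congr 3 with z
  congr 2 with i
  exact i.cases rfl fun _ => rfl

theorem eval_sTerm_update_zero (e : (Fin (k + 2 + 1) → A) → A) (x y : A) :
    (sTerm k m).eval (fun _ => e) (Function.update (fun _ => x) 0 y) =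
      (edgeStep e x)^[m] y := by
  rw [eval_sTerm, Function.update_of_ne one_ne_zero, Function.update_self, Fin.cons_update,
    Fin.succ_zero_eq_one, Fin.cons_const]
  simp only [Function.update_idem]
  rfl

end EdgeTerms

namespace IsEdgeOp

variable {A : Type} {k : ℕ}

theorem apply_const {e : (Fin (k + 1) → A) → A} (he : IsEdgeOp k e) (x : A) :
    e (fun _ => x) = x := by
  simpa using he.1 x x

theorem edgeStep_self {e : (Fin (k + 1) → A) → A} (he : IsEdgeOp k e) (x : A) :
    edgeStep e x x = x := by
  rw [edgeStep, Function.update_eq_self_iff.mpr rfl, he.apply_const]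

variable {e : (Fin (k + 2 + 1) → A) → A} (he : IsEdgeOp (k + 2) e)
include he

theorem apply_update_zero_one (x y : A) :
    e (Function.update (Function.update (fun _ => y) 0 x) 1 x) = y := by
  convert he.1 x y using 2
  ext j
  simp only [Function.update_apply, Fin.ext_iff, Fin.val_zero, Fin.val_one]
  split_ifs <;> first | rfl | omega

theorem apply_update_zero_two (x y : A) :
    e (Function.update (Function.update (fun _ => y) 0 x) 2 x) = y := by
  convert he.2.1 x y using 2
  ext j
  simp only [Function.update_apply, Fin.ext_iff, Fin.val_zero, Fin.val_two]
  split_ifs <;> first | rfl | omega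

theorem apply_update_of_three_le {i : Fin (k + 2 + 1)} (hi : 3 ≤ i.val) (x y : A) :
    e (Function.update (fun _ => y) i x) = y := by
  convert he.2.2 i hi x y using 2
  ext j
  exact Function.update_apply _ _ _ _

theorem eval_sTerm_update_of_ne_zero (m : ℕ) {i : Fin (k + 2)} (hi : i ≠ 0) (x y : A) :
    (sTerm k m).eval (fun _ => e) (Function.update (fun _ => x) i y) = x := by
  rw [eval_sTerm, Function.update_of_ne hi.symm]
  refine Function.iterate_fixed ?_ m
  -- With `v` the input tuple, `e` receives `(v 1, x, v 1, v 2, …)`: for `i = 1` this is the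
  -- second edge identity, otherwise it is `x` except for `y` at position `i + 1 ≥ 3`.
  rw [Fin.cons_update]
  obtain rfl | hi1 := eq_or_ne i 1
  · rw [Function.update_self, ← Fin.update_cons_zero (x := x), Fin.cons_const,
      Function.update_eq_self_iff.mpr (by simp [Fin.ext_iff, Nat.mod_eq_of_lt]),
      Fin.succ_one_eq_two]
    exact he.apply_update_zero_two y x
  · rw [Function.update_of_ne hi1.symm, Fin.cons_const,
      Function.update_eq_self_iff.mpr (Function.update_of_ne ?_ _ _).symm]
    · refine he.apply_update_of_three_le ?_ y x
      simp only [ne_eq, Fin.ext_iff, Fin.val_zero, Fin.val_one, Fin.val_succ] at hi hi1 ⊢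
      omega
    · rwa [ne_comm, ne_eq, ← Fin.succ_zero_eq_one, Fin.succ_inj]

end IsEdgeOp

theorem edge_term_yields_dps_general
    {A : Type} [Finite A] (k : ℕ) (hk : 2 ≤ k)
    (e : (Fin (k + 1) → A) → A) (he : IsEdgeOp k e) :
    ∃ (d : Term Unit (fun _ => k + 1) 2) (p : Term Unit (fun _ => k + 1) 3)
      (s : Term Unit (fun _ => k + 1) k),
      let ops : (u : Unit) → (Fin (k + 1) → A) → A := fun _ => e
      (∀ x y : A, Term.eval ops p ![x, y, y] = x) ∧
      (∀ x y : A, Term.eval ops p ![x, x, y] = Term.eval ops d ![x, y]) ∧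
      (∀ x y : A,
        Term.eval ops d ![x, Term.eval ops d ![x, y]] = Term.eval ops d ![x, y]) ∧
      (∀ x y : A,
        Term.eval ops s (fun i => if i.val = 0 then y else x) =
          Term.eval ops d ![x, y]) ∧
      (∀ i : Fin k, 1 ≤ i.val → ∀ x y : A,
        Term.eval ops s (fun j => if j = i then y else x) = x) := by
  obtain ⟨k, rfl⟩ : ∃ k', k = k' + 2 := ⟨k - 2, by omega⟩
  obtain ⟨m, hm⟩ := exists_forall_iterate_succ_idempotent A
  refine ⟨dTerm (k + 2) (m + 1), pTerm (k + 2) m, sTerm k (m + 1), ?_, ?_, ?_, ?_, ?_⟩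
  · intro x y
    rw [eval_pTerm, Function.iterate_fixed (he.edgeStep_self y), he.apply_update_zero_one]
  · intro x y
    rw [eval_pTerm, eval_dTerm, Function.update_eq_self_iff.mpr rfl,
      Function.iterate_succ_apply']
    rfl
  · intro x y
    simp only [eval_dTerm, hm]
  · intro x y
    simp only [Fin.val_eq_zero_iff, ← Function.update_apply (fun _ => x), eval_sTerm_update_zero,
      eval_dTerm]
  · intro i hi x y
    simp only [← Function.update_apply (fun _ => x)]
    exact he.eval_sTerm_update_of_ne_zero (m + 1) (Fin.pos_iff_ne_zero.mp hi) x y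

/-- from a `k`-edge operation `e` on a finite set `A`, the algebra
`(A, e)` has term operations `d`, `p`, `s` satisfying the listed identities. -/
theorem edge_term_yields_dps
    {A : Type} [Finite A] [Nonempty A] (k : ℕ) (hk : 2 ≤ k)
    (e : (Fin (k + 1) → A) → A) (he : IsEdgeOp k e) :
    ∃ (d : Term Unit (fun _ => k + 1) 2) (p : Term Unit (fun _ => k + 1) 3)
      (s : Term Unit (fun _ => k + 1) k),
      let ops : (u : Unit) → (Fin (k + 1) → A) → A := fun _ => e
      (∀ x y : A, Term.eval ops p ![x, y, y] = x) ∧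
      (∀ x y : A, Term.eval ops p ![x, x, y] = Term.eval ops d ![x, y]) ∧
      (∀ x y : A,
        Term.eval ops d ![x, Term.eval ops d ![x, y]] = Term.eval ops d ![x, y]) ∧
      (∀ x y : A,
        Term.eval ops s (fun i => if i.val = 0 then y else x) =
          Term.eval ops d ![x, y]) ∧
      (∀ i : Fin k, 1 ≤ i.val → ∀ x y : A,
        Term.eval ops s (fun j => if j = i then y else x) = x) :=
  edge_term_yields_dps_general k hk e he
end

section
/- Let 𝕊 be an algebra of a finite functional signature, let M be a subuniverse of 𝕊 such that the subalgebra 𝕄 on M is absorption-free (𝕄 has no proper absorbing subuniverse), and let C be a subuniverse of 𝕊 with C ⊴ 𝕊. If C ∩ M ≠ ∅, then M ⊆ C. -/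
theorem eval_mem_closed {σ : Type} {ar : σ → ℕ} {A : Type}
    (ops : (s : σ) → (Fin (ar s) → A) → A) (B : Set A)
    (hB : ClosedUnder ops B) {n : ℕ} (t : Term σ ar n)
    (v : Fin n → A) (hv : ∀ j, v j ∈ B) : t.eval ops v ∈ B := by
  induction t with
  | var i => exact hv i
  | op s ts ih => exact hB s _ fun j => ih j

/-- if `𝕄` is an absorption-free subalgebra of `𝕊` and `C ⊴ 𝕊` meets
`M`, then `M ⊆ C`. -/
theorem absorption_free_subuniverse_inside_absorbing
    {σ : Type} [Finite σ] {ar : σ → ℕ} {S : Type}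
    (ops : (s : σ) → (Fin (ar s) → S) → S)
    (M C : Set S)
    (hMne : M.Nonempty) (hMclosed : ClosedUnder ops M)
    (habsfree : ∀ D : Set S, D ⊆ M → D.Nonempty → ClosedUnder ops D →
      AbsorbsSub ops D M → D = M)
    (hCne : C.Nonempty) (hCclosed : ClosedUnder ops C)
    (hCabs : AbsorbsSub ops C Set.univ)
    (hint : (C ∩ M).Nonempty) :
    M ⊆ C := by
  have key : C ∩ M = M := by
    apply habsfree
    · exact Set.inter_subset_right
    · exact hint
    · intro s a ha
      exact ⟨hCclosed s a fun i => (ha i).1, hMclosed s a fun i => (ha i).2⟩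
    · obtain ⟨n, t, ht⟩ := hCabs
      refine ⟨n, t, fun i a haM haB => ?_⟩
      refine ⟨ht i a (fun j => trivial) (fun j hj => (haB j hj).1), ?_⟩
      exact eval_mem_closed ops M hMclosed t a haM
  intro x hx
  rw [← key] at hx
  exact hx.1
end
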